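/- For any symmetric traceless 3×3 matrix B, the Jacobian of the map B ↦ Q(B) = ∫_{S²}(mm − I/3) f_B dm, where f_B = e^{m·Bm}/∫ e^{m'·Bm'} dm', is positive definite on the space of symmetric traceless matrices: for every nonzero symmetric traceless E, ⟨∇_B Q(B) E, E⟩ = ∫_{S²}(mm:E)² f_B dm − (∫_{S²}(mm:E) f_B dm)² > 0. -/

import Mathlib

/-! The quantity is the variance of `g = quadForm E` on the sphere with respect to the probability
density `f_B`, namely `∫ (g - ∫ g f_B)² f_B`. The density is continuous and everywhere positive and
the surface measure charges every nonempty open set, so this variance vanishes only if `g` is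
constant on the sphere. By homogeneity that forces `E = c • 1`, and `trace E = 0` gives `E = 0`. -/

open MeasureTheory

noncomputable def sphereMeasure :
    Measure (Metric.sphere (0 : EuclideanSpace ℝ (Fin 3)) 1) :=
  (volume : Measure (EuclideanSpace ℝ (Fin 3))).toSphere

noncomputable def quadForm (B : Matrix (Fin 3) (Fin 3) ℝ)
    (m : EuclideanSpace ℝ (Fin 3)) : ℝ :=
  ∑ i, ∑ j, B i j * m i * m j

/-- The Bingham probability density on the sphere associated with `B`. -/
noncomputable def binghamDensity (B : Matrix (Fin 3) (Fin 3) ℝ)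
    (m : EuclideanSpace ℝ (Fin 3)) : ℝ :=
  Real.exp (quadForm B m) /
    ∫ m' : Metric.sphere (0 : EuclideanSpace ℝ (Fin 3)) 1,
      Real.exp (quadForm B m') ∂sphereMeasure

section WeightedVariance

variable {X : Type*} [MeasurableSpace X] {μ : Measure X}

theorem integral_sub_sq_mul_eq {f g : X → ℝ} (hf : Integrable f μ)
    (hgf : Integrable (fun x ↦ g x * f x) μ) (hg2f : Integrable (fun x ↦ g x ^ 2 * f x) μ)
    (hf1 : ∫ x, f x ∂μ = 1) :
    ∫ x, (g x - ∫ y, g y * f y ∂μ) ^ 2 * f x ∂μ =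
      (∫ x, g x ^ 2 * f x ∂μ) - (∫ x, g x * f x ∂μ) ^ 2 := by
  set a := ∫ y, g y * f y ∂μ
  have expand : (fun x ↦ (g x - a) ^ 2 * f x) =
      fun x ↦ g x ^ 2 * f x - 2 * a * (g x * f x) + a ^ 2 * f x := by
    funext x; ring
  have hsub : Integrable (fun x ↦ g x ^ 2 * f x - 2 * a * (g x * f x)) μ :=
    hg2f.sub (hgf.const_mul _)
  rw [expand, integral_add hsub (hf.const_mul _), integral_sub hg2f (hgf.const_mul _),
    integral_const_mul, integral_const_mul, hf1]
  ring

variable [TopologicalSpace X] [CompactSpace X] [OpensMeasurableSpace X] [IsFiniteMeasure μ]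

theorem Continuous.integrable_of_compactSpace {f : X → ℝ} (hf : Continuous f) :
    Integrable f μ :=
  hf.integrable_of_hasCompactSupport (.of_compactSpace f)

theorem integral_sq_mul_sub_sq_pos [μ.IsOpenPosMeasure] {f g : X → ℝ}
    (hf : Continuous f) (hg : Continuous g) (hf_pos : ∀ x, 0 < f x) (hf1 : ∫ x, f x ∂μ = 1)
    (hg_nonconst : ∀ c, ∃ x, g x ≠ c) :
    0 < (∫ x, g x ^ 2 * f x ∂μ) - (∫ x, g x * f x ∂μ) ^ 2 := by
  rw [← integral_sub_sq_mul_eq hf.integrable_of_compactSpace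
    (hg.mul hf).integrable_of_compactSpace ((hg.pow 2).mul hf).integrable_of_compactSpace hf1]
  obtain ⟨x, hx⟩ := hg_nonconst (∫ y, g y * f y ∂μ)
  exact integral_pos_of_integrable_nonneg_nonzero (by fun_prop)
    (by fun_prop : Continuous _).integrable_of_compactSpace
    (fun y ↦ mul_nonneg (sq_nonneg _) (hf_pos y).le)
    (mul_ne_zero (pow_ne_zero 2 (sub_ne_zero.2 hx)) (hf_pos x).ne')

end WeightedVariance

local notation "S²" => Metric.sphere (0 : EuclideanSpace ℝ (Fin 3)) 1

instance : IsFiniteMeasure sphereMeasure := by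
  unfold sphereMeasure; infer_instance

instance : sphereMeasure.IsOpenPosMeasure := by
  unfold sphereMeasure; infer_instance

@[fun_prop]
theorem continuous_quadForm (B : Matrix (Fin 3) (Fin 3) ℝ) : Continuous (quadForm B) := by
  unfold quadForm; fun_prop

theorem integral_exp_quadForm_pos (B : Matrix (Fin 3) (Fin 3) ℝ) :
    0 < ∫ m : S², Real.exp (quadForm B m) ∂sphereMeasure :=
  integral_pos_of_integrable_nonneg_nonzero (x := ⟨EuclideanSpace.single 0 1, by simp⟩)
    (by fun_prop) (by fun_prop : Continuous _).integrable_of_compactSpace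
    (fun _ ↦ (Real.exp_pos _).le) (Real.exp_pos _).ne'

theorem binghamDensity_pos (B : Matrix (Fin 3) (Fin 3) ℝ) (m : EuclideanSpace ℝ (Fin 3)) :
    0 < binghamDensity B m :=
  div_pos (Real.exp_pos _) (integral_exp_quadForm_pos B)

@[fun_prop]
theorem continuous_binghamDensity (B : Matrix (Fin 3) (Fin 3) ℝ) :
    Continuous (binghamDensity B) := by
  unfold binghamDensity; fun_prop

theorem integral_binghamDensity (B : Matrix (Fin 3) (Fin 3) ℝ) :
    ∫ m : S², binghamDensity B m ∂sphereMeasure = 1 := by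
  simp only [binghamDensity]
  rw [integral_div, div_self (integral_exp_quadForm_pos B).ne']

theorem quadForm_smul (E : Matrix (Fin 3) (Fin 3) ℝ) (c : ℝ) (m : EuclideanSpace ℝ (Fin 3)) :
    quadForm E (c • m) = c ^ 2 * quadForm E m := by
  simp only [quadForm, PiLp.smul_apply, smul_eq_mul, Finset.mul_sum]
  congr! 2; ring

theorem quadForm_single (E : Matrix (Fin 3) (Fin 3) ℝ) (i : Fin 3) :
    quadForm E (EuclideanSpace.single i 1) = E i i := by
  simp [quadForm, PiLp.single_apply, mul_ite, Finset.sum_ite_eq']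

theorem quadForm_single_add_single (E : Matrix (Fin 3) (Fin 3) ℝ) (i j : Fin 3) :
    quadForm E (EuclideanSpace.single i 1 + EuclideanSpace.single j 1) =
      E i i + E i j + E j i + E j j := by
  simp only [quadForm, PiLp.add_apply, PiLp.single_apply]
  rw [Finset.sum_comm]
  simp only [mul_add, mul_ite, mul_one, mul_zero, Finset.sum_add_distrib, Finset.sum_ite_irrel,
    Finset.sum_ite_eq', Finset.mem_univ, ↓reduceIte, Finset.sum_const_zero]
  ring

theorem norm_single_add_single_sq {i j : Fin 3} (hij : i ≠ j) :
    ‖EuclideanSpace.single i (1 : ℝ) + EuclideanSpace.single j 1‖ ^ 2 = 2 := by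
  rw [norm_add_sq_real, EuclideanSpace.inner_single_left]
  norm_num [hij]

theorem quadForm_eq_mul_norm_sq {E : Matrix (Fin 3) (Fin 3) ℝ} {c : ℝ}
    (h : ∀ m : S², quadForm E m = c) (m : EuclideanSpace ℝ (Fin 3)) :
    quadForm E m = c * ‖m‖ ^ 2 := by
  rcases eq_or_ne m 0 with rfl | hm
  · simpa using quadForm_smul E 0 0
  have hunit : ‖m‖⁻¹ • m ∈ S² := by
    simp [norm_smul, hm]
  have := h ⟨_, hunit⟩
  rw [quadForm_smul] at this
  field_simp at this ⊢
  linarith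

theorem Matrix.IsSymm.eq_zero_of_forall_quadForm_eq {E : Matrix (Fin 3) (Fin 3) ℝ}
    (hE : E.IsSymm) (hEtr : E.trace = 0) {c : ℝ} (h : ∀ m : S², quadForm E m = c) : E = 0 := by
  have homogeneous := quadForm_eq_mul_norm_sq h
  have diag (i : Fin 3) : E i i = c := by
    simpa [quadForm_single] using homogeneous (EuclideanSpace.single i 1)
  have hc : c = 0 := by
    rw [Matrix.trace_fin_three] at hEtr
    linarith [diag 0, diag 1, diag 2]
  ext i j
  rcases eq_or_ne i j with rfl | hij
  · simp [diag i, hc]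
  · have pair := homogeneous (EuclideanSpace.single i 1 + EuclideanSpace.single j 1)
    rw [quadForm_single_add_single, norm_single_add_single_sq hij, diag i, diag j,
      hE.apply i j] at pair
    simp only [Matrix.zero_apply]
    linarith

theorem jacobian_pos_def_general (B E : Matrix (Fin 3) (Fin 3) ℝ)
    (hE : E.IsSymm) (hEtr : E.trace = 0) (hE0 : E ≠ 0) :
    0 < (∫ m : Metric.sphere (0 : EuclideanSpace ℝ (Fin 3)) 1,
          (quadForm E m) ^ 2 * binghamDensity B m ∂sphereMeasure) -
        (∫ m : Metric.sphere (0 : EuclideanSpace ℝ (Fin 3)) 1,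
          quadForm E m * binghamDensity B m ∂sphereMeasure) ^ 2 := by
  refine integral_sq_mul_sub_sq_pos (by fun_prop) (by fun_prop) (fun m ↦ binghamDensity_pos B m)
    (integral_binghamDensity B) fun c ↦ ?_
  by_contra! h
  exact hE0 (hE.eq_zero_of_forall_quadForm_eq hEtr h)

/-- The Jacobian of `B ↦ Q(B)` is positive definite: for nonzero symmetric traceless
`E`, the variance `∫(mm:E)² f_B − (∫(mm:E) f_B)²` is strictly positive. -/
theorem jacobian_pos_def (B E : Matrix (Fin 3) (Fin 3) ℝ)
    (hB : B.IsSymm) (hBtr : B.trace = 0)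
    (hE : E.IsSymm) (hEtr : E.trace = 0) (hE0 : E ≠ 0) :
    0 < (∫ m : Metric.sphere (0 : EuclideanSpace ℝ (Fin 3)) 1,
          (quadForm E m) ^ 2 * binghamDensity B m ∂sphereMeasure) -
        (∫ m : Metric.sphere (0 : EuclideanSpace ℝ (Fin 3)) 1,
          quadForm E m * binghamDensity B m ∂sphereMeasure) ^ 2 :=
  jacobian_pos_def_general B E hE hEtr hE0
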